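/- arXiv:2504.13426 — 2 statements merged into one kernel-verified Lean document; each statement's English description precedes it below -/
import Mathlib

section
/- For a connected graph G on N ≥ 2 vertices with adjacency matrix A, if L is the diameter of G, then the average number of walk-based neighbor utilizations AvgNAT(A, L) := (1/N) Σ_i Σ_j (A^L)_{ij} satisfies N − 1 ≤ AvgNAT(A, L). -/
open Matrix Filter Finset

namespace WalkAuxStmt0

variable {V : Type*} {G : SimpleGraph V}

/-- Zig-zag walk of length `n` along an edge. -/
def zig : ∀ {a b : V}, G.Adj a b → ℕ → Σ c : V, G.Walk a c
  | a, _, _, 0 => ⟨a, .nil⟩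
  | _, _, h, n + 1 => ⟨(zig h.symm n).1, .cons h (zig h.symm n).2⟩

lemma zig_length : ∀ {a b : V} (h : G.Adj a b) (n : ℕ), (zig h n).2.length = n
  | _, _, _, 0 => rfl
  | _, _, h, n + 1 => by
    simpa [zig] using zig_length h.symm n

lemma zig_getVert : ∀ {a b : V} (h : G.Adj a b) (n k : ℕ), k ≤ n →
    (zig h n).2.getVert k = if Even k then a else b
  | a, b, h, 0, k, hk => by
    interval_cases k; simp [zig]
  | a, b, h, n + 1, 0, hk => by simp [zig]
  | a, b, h, n + 1, k + 1, hk => by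
    show (SimpleGraph.Walk.cons h (zig h.symm n).2).getVert (k+1) = _
    rw [SimpleGraph.Walk.getVert_cons_succ, zig_getVert h.symm n k (by omega)]
    by_cases he : Even k <;> simp [he, Nat.even_add_one]

lemma row_sum_ge (V : Type*) [Fintype V] [DecidableEq V] (G : SimpleGraph V)
    [DecidableRel G.Adj] (hG : G.Connected) (t : ℕ) (ht : ∀ u v, G.dist u v ≤ t) (i : V) :
    Fintype.card V - 1 ≤ ∑ j, Fintype.card {p : G.Walk i j | p.length = t} := by
  classical
  set S := Σ j : V, {p : G.Walk i j | p.length = t} with hS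
  set ρ : S → V := fun s =>
    if G.dist i ((s.2 : G.Walk i s.1).getVert t) < G.dist i ((s.2 : G.Walk i s.1).getVert (t-1))
    then (s.2 : G.Walk i s.1).getVert (t-1) else (s.2 : G.Walk i s.1).getVert t with hρ
  have key : ∀ j : V, j ≠ i → ∃ s : S, ρ s = j := by
    intro j hj
    obtain ⟨P, hP⟩ := hG.exists_walk_length_eq_dist i j
    set d := G.dist i j with hd
    have hd1 : 1 ≤ d := hG.pos_dist_of_ne (Ne.symm hj)
    have hdt : d ≤ t := ht i j
    obtain ⟨p, hadj, Q', hcons⟩ := SimpleGraph.Walk.exists_eq_cons_of_ne hj P.reverse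
    have hQ'len : Q'.length = d - 1 := by
      have h1 := congrArg SimpleGraph.Walk.length hcons
      rw [SimpleGraph.Walk.length_reverse, hP, SimpleGraph.Walk.length_cons] at h1
      omega
    set Q := Q'.reverse with hQdef
    have hQ : Q.length = d - 1 := by
      rw [hQdef, SimpleGraph.Walk.length_reverse, hQ'len]
    have hQd : G.dist i p = d - 1 := by
      have h1 : G.dist i p ≤ d - 1 := hQ ▸ SimpleGraph.dist_le Q
      have h2 : d ≤ G.dist i p + G.dist p j := hG.dist_triangle
      have hpj : G.dist p j = 1 := SimpleGraph.dist_eq_one_iff_adj.mpr hadj.symm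
      omega
    set m := t - (d - 1) with hm
    have hm1 : 1 ≤ m := by omega
    set Z := zig hadj.symm m with hZ
    set W := Q.append Z.2 with hW
    have hWlen : W.length = t := by
      rw [hW, SimpleGraph.Walk.length_append, hQ, zig_length]; omega
    have hx : W.getVert t = if Even m then p else j := by
      rw [hW, SimpleGraph.Walk.getVert_append, if_neg (by omega : ¬ t < Q.length),
        show t - Q.length = m by omega]
      exact zig_getVert hadj.symm m m le_rfl
    have hy : W.getVert (t-1) = if Even (m-1) then p else j := by
      rw [hW, SimpleGraph.Walk.getVert_append, if_neg (by omega : ¬ t - 1 < Q.length),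
        show t - 1 - Q.length = m - 1 by omega]
      exact zig_getVert hadj.symm m (m-1) (by omega)
    refine ⟨⟨Z.1, ⟨W, hWlen⟩⟩, ?_⟩
    have hpar : Even (m-1) ↔ ¬ Even m := by
      rw [Nat.even_iff, Nat.even_iff]; omega
    show (if G.dist i (W.getVert t) < G.dist i (W.getVert (t-1))
      then W.getVert (t-1) else W.getVert t) = j
    by_cases he : Even m
    · have hx' : W.getVert t = p := by rw [hx, if_pos he]
      have hy' : W.getVert (t-1) = j := by rw [hy, if_neg (fun hE => (hpar.mp hE) he)]
      rw [hx', hy', if_pos (by omega)]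
    · have hx' : W.getVert t = j := by rw [hx, if_neg he]
      have hy' : W.getVert (t-1) = p := by rw [hy, if_pos (hpar.mpr he)]
      rw [hx', hy', if_neg (by omega)]
  choose f hf using key
  have hinj : Function.Injective (fun a : {j : V // j ≠ i} => f a.1 a.2) := by
    intro a b hab
    have hab' : f a.1 a.2 = f b.1 b.2 := hab
    exact Subtype.ext (by rw [← hf a.1 a.2, ← hf b.1 b.2, hab'])
  have hcard := Fintype.card_le_of_injective _ hinj
  rw [Fintype.card_sigma] at hcard
  refine le_trans (le_of_eq ?_) hcard
  rw [Fintype.card_subtype_compl (· = i), Fintype.card_subtype_eq]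

end WalkAuxStmt0

/-- For a connected graph `G` on `N ≥ 2` vertices with adjacency matrix `A` and
diameter `L`, the average number of walk-based neighbor utilizations
`AvgNAT(A, L) = (1/N) ∑ᵢ ∑ⱼ (A^L)ᵢⱼ` is at least `N - 1`. -/
theorem stmt0 (N : ℕ) (hN : 2 ≤ N) (G : SimpleGraph (Fin N)) [DecidableRel G.Adj]
    (hG : G.Connected) :
    (N - 1 : ℝ) ≤ (1 / N) * ∑ i, ∑ j, (G.adjMatrix ℝ ^ G.diam) i j := by
  classical
  have hNe : G.ediam ≠ ⊤ := by
    have : Nonempty (Fin N) := ⟨⟨0, by omega⟩⟩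
    obtain ⟨u, v, huv⟩ := SimpleGraph.exists_edist_eq_ediam_of_finite (G := G)
    rw [← huv]
    exact SimpleGraph.edist_ne_top_iff_reachable.mpr (hG u v)
  have ht : ∀ u v, G.dist u v ≤ G.diam := fun u v => SimpleGraph.dist_le_diam hNe
  have hrow : ∀ i, ((N : ℝ) - 1) ≤ ∑ j, (G.adjMatrix ℝ ^ G.diam) i j := by
    intro i
    have h1 := WalkAuxStmt0.row_sum_ge (Fin N) G hG G.diam ht i
    rw [Fintype.card_fin] at h1
    have h2 : ∀ j, (G.adjMatrix ℝ ^ G.diam) i j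
        = (Fintype.card {p : G.Walk i j | p.length = G.diam} : ℝ) := fun j =>
      SimpleGraph.adjMatrix_pow_apply_eq_card_walk _ _ _
    rw [Finset.sum_congr rfl fun j _ => h2 j, ← Nat.cast_sum]
    have h3 : ((N - 1 : ℕ) : ℝ) = (N : ℝ) - 1 := by
      rw [Nat.cast_sub (by omega)]; simp
    rw [← h3]
    exact_mod_cast h1
  have hsum : (N : ℝ) * ((N : ℝ) - 1) ≤ ∑ i, ∑ j, (G.adjMatrix ℝ ^ G.diam) i j := by
    calc (N : ℝ) * ((N : ℝ) - 1) = ∑ _i : Fin N, ((N : ℝ) - 1) := by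
          simp [Finset.sum_const, Fintype.card_fin, mul_comm]; ring
      _ ≤ _ := Finset.sum_le_sum fun i _ => hrow i
  have hN0 : (0 : ℝ) < N := by exact_mod_cast (by omega : 0 < N)
  calc (N : ℝ) - 1 = (1 / (N : ℝ)) * ((N : ℝ) * ((N : ℝ) - 1)) := by field_simp
    _ ≤ _ := mul_le_mul_of_nonneg_left hsum (by positivity)
end

section
/- Define the self-attention score SAS(M, k) := (1/N) Σ_{i=1}^N M^k_{ii} / (Σ_{j=1}^N M^k_{ij}) for a matrix M with positive row sums of M^k. For a connected graph with self-loops and Â = D̃^{−1/2} Ã D̃^{−1/2}, the limit as k → ∞ of SAS(Â, k) equals 1/N. -/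
set_option maxHeartbeats 1000000
open Matrix Filter Finset

lemma pow_entry_tendsto_zero {n : ℕ} (B : Matrix (Fin n) (Fin n) ℝ) (hB : B.IsHermitian)
    (h : ∀ (μ : ℝ) (x : Fin n → ℝ), x ≠ 0 → B *ᵥ x = μ • x → |μ| < 1) (i j : Fin n) :
    Tendsto (fun k => (B ^ k) i j) atTop (nhds 0) := by
  set U : Matrix (Fin n) (Fin n) ℝ := (hB.eigenvectorUnitary : Matrix (Fin n) (Fin n) ℝ)
  set ν : Fin n → ℝ := hB.eigenvalues
  have hUU : star U * U = 1 := (Matrix.mem_unitaryGroup_iff').mp (hB.eigenvectorUnitary).2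
  have hspec : B = U * diagonal ν * star U := by
    have := hB.spectral_theorem
    simpa [RCLike.ofReal_real_eq_id] using this
  have key : ∀ D E : Matrix (Fin n) (Fin n) ℝ,
      (U * D * star U) * (U * E * star U) = U * (D * E) * star U := by
    intro D E
    have h1 : star U * (U * (E * star U)) = E * star U := by
      rw [← Matrix.mul_assoc, hUU, Matrix.one_mul]
    calc (U * D * star U) * (U * E * star U)
        = U * (D * (star U * (U * (E * star U)))) := by simp only [Matrix.mul_assoc]
      _ = U * (D * (E * star U)) := by rw [h1]
      _ = U * (D * E) * star U := by simp only [Matrix.mul_assoc]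
  have hpow : ∀ k : ℕ, B ^ (k+1) = U * diagonal (fun l => ν l ^ (k+1)) * star U := by
    intro k
    induction k with
    | zero => simpa [pow_one] using hspec
    | succ m ih =>
        rw [pow_succ, ih, hspec, key, diagonal_mul_diagonal]
        congr 2
  have hev : ∀ l, |ν l| < 1 := by
    intro l
    have hnz : (⇑(hB.eigenvectorBasis l) : Fin n → ℝ) ≠ 0 := by
      intro hx
      have h2 := hB.eigenvectorBasis.orthonormal.1 l
      rw [show (hB.eigenvectorBasis l) = 0 from PiLp.ext fun t => congrFun hx t] at h2
      simp at h2
    exact h (ν l) _ hnz (hB.mulVec_eigenvectorBasis l)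
  have hentry : ∀ k : ℕ, (B ^ (k+1)) i j = ∑ l, ν l ^ (k+1) * (U i l * U j l) := by
    intro k
    rw [hpow k, Matrix.mul_apply]
    refine Finset.sum_congr rfl fun l _ => ?_
    rw [Matrix.mul_diagonal, star_apply, star_trivial]
    ring
  have hlim : Tendsto (fun k : ℕ => ∑ l, ν l ^ (k+1) * (U i l * U j l)) atTop (nhds 0) := by
    have : Tendsto (fun k : ℕ => ∑ l, ν l ^ (k+1) * (U i l * U j l)) atTop
        (nhds (∑ l : Fin n, 0)) := by
      refine tendsto_finset_sum _ fun l _ => ?_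
      have h0 : Tendsto (fun k : ℕ => ν l ^ k) atTop (nhds 0) :=
        tendsto_pow_atTop_nhds_zero_of_abs_lt_one (hev l)
      have := (h0.comp (tendsto_add_atTop_nat 1)).mul_const (U i l * U j l)
      simpa using this
    simpa using this
  have : Tendsto (fun k : ℕ => (B ^ (k+1)) i j) atTop (nhds 0) := by
    simpa [hentry] using hlim
  exact (tendsto_add_atTop_iff_nat 1).mp this

/-- For a connected graph with self-loops and symmetrically normalized adjacency
matrix `Â`, the self-attention score `SAS(Â, k) = (1/N) ∑ᵢ Â^k_{ii} / (∑ⱼ Â^k_{ij})`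
tends to `1/N` as `k → ∞`. -/
theorem stmt4 (N : ℕ) (G : SimpleGraph (Fin N)) [DecidableRel G.Adj] (hG : G.Connected)
    (Atil : Matrix (Fin N) (Fin N) ℝ) (hAtil : Atil = G.adjMatrix ℝ + 1)
    (Dhalf : Matrix (Fin N) (Fin N) ℝ)
    (hDhalf : Dhalf = Matrix.diagonal fun i => (Real.sqrt (∑ j, Atil i j))⁻¹)
    (Ahat : Matrix (Fin N) (Fin N) ℝ) (hAhat : Ahat = Dhalf * Atil * Dhalf) :
    Tendsto (fun k => (1 / N : ℝ) * ∑ i, (Ahat ^ k) i i / ∑ j, (Ahat ^ k) i j)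
      atTop (nhds (1 / N)) := by
  haveI : Nonempty (Fin N) := hG.nonempty
  -- basic facts about Atil
  have hAs : ∀ i j, Atil i j = Atil j i := by
    intro i j
    simp [hAtil, Matrix.add_apply, Matrix.one_apply, SimpleGraph.adjMatrix_apply,
      G.adj_comm, eq_comm]
  have hAnn : ∀ i j, 0 ≤ Atil i j := by
    intro i j
    simp only [hAtil, Matrix.add_apply, Matrix.one_apply, SimpleGraph.adjMatrix_apply]
    positivity
  have hAd : ∀ i, Atil i i = 1 := by
    intro i
    simp [hAtil, Matrix.add_apply, Matrix.one_apply]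
  have hAadj : ∀ i j, G.Adj i j → Atil i j = 1 := by
    intro i j h
    have : i ≠ j := G.ne_of_adj h
    simp [hAtil, Matrix.add_apply, Matrix.one_apply, h, this]
  set d : Fin N → ℝ := fun i => ∑ j, Atil i j with hd_def
  have hd : ∀ i, (1:ℝ) ≤ d i := by
    intro i
    calc (1:ℝ) = Atil i i := (hAd i).symm
    _ ≤ ∑ j, Atil i j := Finset.single_le_sum (fun j _ => hAnn i j) (Finset.mem_univ i)
  have hdpos : ∀ i, (0:ℝ) < d i := fun i => lt_of_lt_of_le one_pos (hd i)
  set r : Fin N → ℝ := fun i => Real.sqrt (d i) with hr_def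
  have hrpos : ∀ i, (0:ℝ) < r i := fun i => Real.sqrt_pos.mpr (hdpos i)
  have hr2 : ∀ i, r i ^ 2 = d i := fun i => Real.sq_sqrt (hdpos i).le
  have hAhat' : ∀ i j, Ahat i j = (r i)⁻¹ * Atil i j * (r j)⁻¹ := by
    intro i j
    rw [hAhat, hDhalf, Matrix.mul_diagonal, Matrix.diagonal_mul]
  have hsym : ∀ i j, Ahat i j = Ahat j i := by
    intro i j; rw [hAhat' i j, hAhat' j i, hAs i j]; ring
  set S : ℝ := ∑ i, d i with hS_def
  have hSpos : (0:ℝ) < S := Finset.sum_pos (fun i _ => hdpos i) Finset.univ_nonempty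
  set q : Fin N → ℝ := fun i => r i / Real.sqrt S with hq_def
  have hqpos : ∀ i, (0:ℝ) < q i := fun i => div_pos (hrpos i) (Real.sqrt_pos.mpr hSpos)
  have hqq : ∑ i, q i ^ 2 = 1 := by
    have : ∀ i, q i ^ 2 = d i / S := by
      intro i
      rw [hq_def]
      rw [div_pow, hr2, Real.sq_sqrt hSpos.le]
    rw [Finset.sum_congr rfl fun i _ => this i, ← Finset.sum_div, ← hS_def,
      div_self hSpos.ne']
  have hAr : Ahat *ᵥ r = r := by
    funext i
    have : ∀ j, Ahat i j * r j = (r i)⁻¹ * Atil i j := by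
      intro j
      rw [hAhat', mul_assoc ((r i)⁻¹ * Atil i j), inv_mul_cancel₀ (hrpos j).ne', mul_one]
    rw [Matrix.mulVec, dotProduct, Finset.sum_congr rfl fun j _ => this j, ← Finset.mul_sum]
    rw [show ∑ j, Atil i j = d i from rfl, ← hr2, pow_two, inv_mul_cancel_left₀ (hrpos i).ne']
  have hAq : Ahat *ᵥ q = q := by
    have : q = (Real.sqrt S)⁻¹ • r := by
      funext i; simp [hq_def, div_eq_inv_mul]
    rw [this, Matrix.mulVec_smul, hAr]
  set Q : Matrix (Fin N) (Fin N) ℝ := Matrix.of (fun i j => q i * q j) with hQ_def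
  have hAQ : Ahat * Q = Q := by
    ext i j
    rw [Matrix.mul_apply]
    have : ∀ l, Ahat i l * Q l j = (Ahat i l * q l) * q j := by
      intro l; rw [hQ_def]; simp [Matrix.of_apply]; ring
    rw [Finset.sum_congr rfl fun l _ => this l, ← Finset.sum_mul]
    have : ∑ l, Ahat i l * q l = q i := congrFun hAq i
    rw [show ∑ l, Ahat i l * q l = (Ahat *ᵥ q) i from rfl, hAq]
    simp [hQ_def]
  have hQA : Q * Ahat = Q := by
    ext i j
    rw [Matrix.mul_apply]
    have : ∀ l, Q i l * Ahat l j = q i * (Ahat j l * q l) := by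
      intro l; rw [hQ_def, hsym l j]; simp [Matrix.of_apply]; ring
    rw [Finset.sum_congr rfl fun l _ => this l, ← Finset.mul_sum]
    rw [show ∑ l, Ahat j l * q l = (Ahat *ᵥ q) j from rfl, hAq]
    simp [hQ_def]
  have hQQ : Q * Q = Q := by
    ext i j
    rw [Matrix.mul_apply]
    have : ∀ l, Q i l * Q l j = (q i * q j) * q l ^ 2 := by
      intro l; simp [hQ_def, Matrix.of_apply]; ring
    rw [Finset.sum_congr rfl fun l _ => this l, ← Finset.mul_sum, hqq, mul_one]
    simp [hQ_def]
  have hAkQ : ∀ k : ℕ, 1 ≤ k → Ahat ^ k * Q = Q := by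
    intro k hk
    induction k with
    | zero => omega
    | succ m ih =>
        rcases Nat.eq_or_lt_of_le hk with h1 | h1
        · rw [← h1]; simpa using hAQ
        · rw [pow_succ, Matrix.mul_assoc, hAQ, ih (by omega)]
  set B : Matrix (Fin N) (Fin N) ℝ := Ahat - Q with hB_def
  have hBpow : ∀ k : ℕ, 1 ≤ k → B ^ k = Ahat ^ k - Q := by
    intro k hk
    induction k with
    | zero => omega
    | succ m ih =>
        rcases Nat.eq_or_lt_of_le hk with h1 | h1
        · rw [← h1]; simpa using hB_def
        · rw [pow_succ, ih (by omega), Matrix.sub_mul, hB_def, Matrix.mul_sub, Matrix.mul_sub,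
            hQA, hQQ, ← pow_succ, hAkQ m (by omega)]
          abel
  have hBH : B.IsHermitian := by
    refine Matrix.ext fun i j => ?_
    rw [Matrix.conjTranspose_apply, star_trivial, hB_def]
    simp only [Matrix.sub_apply, hQ_def, Matrix.of_apply]
    rw [hsym j i]; ring
  have hEig : ∀ (μ : ℝ) (x : Fin N → ℝ), x ≠ 0 → B *ᵥ x = μ • x → |μ| < 1 := by
    intro μ x hx hμx
    rcases eq_or_ne μ 0 with h0 | h0
    · rw [h0]; norm_num
    -- orthogonality to q
    have hqB : q ᵥ* B = 0 := by
      funext j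
      rw [hB_def, Matrix.vecMul_sub, Pi.sub_apply]
      have h1 : (q ᵥ* Ahat) j = q j := by
        have he : (q ᵥ* Ahat) j = ∑ l, Ahat j l * q l := by
          rw [Matrix.vecMul, dotProduct]
          exact Finset.sum_congr rfl fun l _ => by rw [hsym l j]; ring
        rw [he]
        exact congrFun hAq j
      have h2 : (q ᵥ* Q) j = q j := by
        rw [Matrix.vecMul, dotProduct]
        have : ∀ l, q l * Q l j = q l ^ 2 * q j := by
          intro l; simp [hQ_def, Matrix.of_apply]; ring
        rw [Finset.sum_congr rfl fun l _ => this l, ← Finset.sum_mul, hqq, one_mul]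
      rw [h1, h2, sub_self, Pi.zero_apply]
    have hqx : q ⬝ᵥ x = 0 := by
      have h1 : q ⬝ᵥ (B *ᵥ x) = 0 := by
        rw [Matrix.dotProduct_mulVec, hqB, zero_dotProduct]
      rw [hμx, dotProduct_smul, smul_eq_mul] at h1
      exact (mul_eq_zero.mp h1).resolve_left h0
    have hQx : Q *ᵥ x = 0 := by
      funext i
      have he : (Q *ᵥ x) i = q i * (q ⬝ᵥ x) := by
        simp [Matrix.mulVec, dotProduct, hQ_def, Finset.mul_sum, mul_assoc]
      rw [he, hqx, mul_zero, Pi.zero_apply]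
    have hAx : Ahat *ᵥ x = μ • x := by
      have : B *ᵥ x = Ahat *ᵥ x - Q *ᵥ x := by rw [hB_def, Matrix.sub_mulVec]
      rw [this, hQx, sub_zero] at hμx
      exact hμx
    -- quadratic forms
    set y : Fin N → ℝ := fun i => x i * (r i)⁻¹ with hy_def
    have hxy : ∀ i, x i = r i * y i := by
      intro i
      simp only [hy_def]
      rw [mul_comm (x i), ← mul_assoc, mul_inv_cancel₀ (hrpos i).ne', one_mul]
    set E : ℝ := ∑ i, ∑ j, Atil i j * (y i * y j) with hE_def
    set Nx : ℝ := ∑ i, d i * y i ^ 2 with hNx_def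
    have hNxpos : 0 < Nx := by
      have hne : ∃ i, y i ≠ 0 := by
        by_contra hc
        push_neg at hc
        apply hx
        funext i
        rw [hxy i, hc i, mul_zero, Pi.zero_apply]
      obtain ⟨i0, hi0⟩ := hne
      refine Finset.sum_pos' (fun i _ => ?_) ⟨i0, Finset.mem_univ i0, ?_⟩
      · have := hdpos i
        positivity
      · exact mul_pos (hdpos i0)
          (lt_of_le_of_ne (sq_nonneg _) (Ne.symm (pow_ne_zero 2 hi0)))
    have hEq : E = μ * Nx := by
      have h1 : x ⬝ᵥ (Ahat *ᵥ x) = E := by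
        rw [hE_def]
        simp only [dotProduct, Matrix.mulVec, Finset.mul_sum]
        refine Finset.sum_congr rfl fun i _ => Finset.sum_congr rfl fun j _ => ?_
        rw [hAhat']
        simp only [hy_def]
        ring
      have h2 : x ⬝ᵥ x = Nx := by
        rw [hNx_def, dotProduct]
        refine Finset.sum_congr rfl fun i _ => ?_
        rw [hxy i, ← hr2 i]
        ring
      rw [hAx, dotProduct_smul, smul_eq_mul, h2] at h1
      exact h1.symm
    have hrowsum : ∀ i, ∑ j, Atil i j * y i ^ 2 = d i * y i ^ 2 := by
      intro i
      rw [← Finset.sum_mul]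
    have hcolsum : ∑ i, ∑ j, Atil i j * y j ^ 2 = Nx := by
      rw [Finset.sum_comm, hNx_def]
      refine Finset.sum_congr rfl fun j _ => ?_
      rw [← Finset.sum_mul]
      congr 1
      exact Finset.sum_congr rfl fun i _ => hAs i j
    have hminus : ∑ i, ∑ j, Atil i j * (y i - y j) ^ 2 = 2 * Nx - 2 * E := by
      have expand : ∀ i j, Atil i j * (y i - y j) ^ 2
          = Atil i j * y i ^ 2 + Atil i j * y j ^ 2 - 2 * (Atil i j * (y i * y j)) := by
        intro i j; ring
      calc ∑ i, ∑ j, Atil i j * (y i - y j) ^ 2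
          = ∑ i, ∑ j, (Atil i j * y i ^ 2 + Atil i j * y j ^ 2
              - 2 * (Atil i j * (y i * y j))) := by
            exact Finset.sum_congr rfl fun i _ => Finset.sum_congr rfl fun j _ => expand i j
        _ = (∑ i, ∑ j, Atil i j * y i ^ 2) + (∑ i, ∑ j, Atil i j * y j ^ 2)
              - 2 * ∑ i, ∑ j, Atil i j * (y i * y j) := by
            simp [Finset.sum_sub_distrib, Finset.sum_add_distrib, Finset.mul_sum]
        _ = 2 * Nx - 2 * E := by
            rw [Finset.sum_congr rfl fun i (_ : i ∈ Finset.univ) => hrowsum i, hcolsum,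
              ← hNx_def, ← hE_def]
            ring
    have hplus : ∑ i, ∑ j, Atil i j * (y i + y j) ^ 2 = 2 * Nx + 2 * E := by
      have expand : ∀ i j, Atil i j * (y i + y j) ^ 2
          = Atil i j * y i ^ 2 + Atil i j * y j ^ 2 + 2 * (Atil i j * (y i * y j)) := by
        intro i j; ring
      calc ∑ i, ∑ j, Atil i j * (y i + y j) ^ 2
          = ∑ i, ∑ j, (Atil i j * y i ^ 2 + Atil i j * y j ^ 2
              + 2 * (Atil i j * (y i * y j))) := by
            exact Finset.sum_congr rfl fun i _ => Finset.sum_congr rfl fun j _ => expand i j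
        _ = (∑ i, ∑ j, Atil i j * y i ^ 2) + (∑ i, ∑ j, Atil i j * y j ^ 2)
              + 2 * ∑ i, ∑ j, Atil i j * (y i * y j) := by
            simp [Finset.sum_add_distrib, Finset.mul_sum]
        _ = 2 * Nx + 2 * E := by
            rw [Finset.sum_congr rfl fun i (_ : i ∈ Finset.univ) => hrowsum i, hcolsum,
              ← hNx_def, ← hE_def]
            ring
    have hle : μ ≤ 1 := by
      have hnn : 0 ≤ 2 * Nx - 2 * E := by
        rw [← hminus]
        refine Finset.sum_nonneg fun i _ => Finset.sum_nonneg fun j _ => ?_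
        have := hAnn i j
        positivity
      nlinarith [hNxpos, hEq]
    have hge : -1 ≤ μ := by
      have hnn : 0 ≤ 2 * Nx + 2 * E := by
        rw [← hplus]
        refine Finset.sum_nonneg fun i _ => Finset.sum_nonneg fun j _ => ?_
        have := hAnn i j
        positivity
      nlinarith [hNxpos, hEq]
    have hne1 : μ ≠ 1 := by
      intro h1
      have hzero : ∑ i, ∑ j, Atil i j * (y i - y j) ^ 2 = 0 := by
        rw [hminus, hEq, h1]; ring
      have hterm : ∀ i j, Atil i j * (y i - y j) ^ 2 = 0 := by
        have houter := (Finset.sum_eq_zero_iff_of_nonneg (fun i (_ : i ∈ Finset.univ) =>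
          Finset.sum_nonneg fun j _ => by have := hAnn i j; positivity)).mp hzero
        intro i j
        have hinner := (Finset.sum_eq_zero_iff_of_nonneg (fun j (_ : j ∈ Finset.univ) =>
          by have := hAnn i j; positivity)).mp (houter i (Finset.mem_univ i))
        exact hinner j (Finset.mem_univ j)
      have hadj : ∀ i j, G.Adj i j → y i = y j := by
        intro i j hij
        have := hterm i j
        rw [hAadj i j hij, one_mul, pow_eq_zero_iff (two_ne_zero)] at this
        linarith [sub_eq_zero.mp this]
      have hconst : ∀ i j : Fin N, y i = y j := by
        intro i j
        obtain ⟨w⟩ := hG.preconnected i j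
        induction w with
        | nil => rfl
        | cons h p ih => exact (hadj _ _ h).trans ih
      -- then q ⬝ᵥ x ≠ 0 unless y = 0
      obtain ⟨i0⟩ := ‹Nonempty (Fin N)›
      have hy0 : y i0 = 0 := by
        have hqx' : q ⬝ᵥ x = y i0 * (S / Real.sqrt S) := by
          rw [dotProduct]
          have : ∀ i, q i * x i = y i0 * (d i / Real.sqrt S) := by
            intro i
            rw [hxy i, hq_def, hconst i i0, ← hr2 i]
            ring
          rw [Finset.sum_congr rfl fun i _ => this i, ← Finset.mul_sum, ← Finset.sum_div,
            ← hS_def]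
        rw [hqx] at hqx'
        have hSr : S / Real.sqrt S ≠ 0 := by
          have := Real.sqrt_pos.mpr hSpos
          positivity
        exact (mul_eq_zero.mp hqx'.symm).resolve_right hSr
      apply hx
      funext i
      rw [hxy i, hconst i i0, hy0, mul_zero, Pi.zero_apply]
    have hnem1 : μ ≠ -1 := by
      intro h1
      have hzero : ∑ i, ∑ j, Atil i j * (y i + y j) ^ 2 = 0 := by
        rw [hplus, hEq, h1]; ring
      have hterm : ∀ i j, Atil i j * (y i + y j) ^ 2 = 0 := by
        have houter := (Finset.sum_eq_zero_iff_of_nonneg (fun i (_ : i ∈ Finset.univ) =>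
          Finset.sum_nonneg fun j _ => by have := hAnn i j; positivity)).mp hzero
        intro i j
        have hinner := (Finset.sum_eq_zero_iff_of_nonneg (fun j (_ : j ∈ Finset.univ) =>
          by have := hAnn i j; positivity)).mp (houter i (Finset.mem_univ i))
        exact hinner j (Finset.mem_univ j)
      apply hx
      funext i
      have := hterm i i
      rw [hAd i, one_mul, pow_eq_zero_iff (two_ne_zero)] at this
      have hyi : y i = 0 := by linarith
      rw [hxy i, hyi, mul_zero, Pi.zero_apply]
    exact abs_lt.mpr ⟨lt_of_le_of_ne hge (Ne.symm hnem1), lt_of_le_of_ne hle hne1⟩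
  have hB0 : ∀ i j, Tendsto (fun k => (B ^ k) i j) atTop (nhds 0) :=
    pow_entry_tendsto_zero B hBH hEig
  have hAk : ∀ i j, Tendsto (fun k => (Ahat ^ k) i j) atTop (nhds (q i * q j)) := by
    intro i j
    have h1 : Tendsto (fun k => (B ^ k) i j + q i * q j) atTop (nhds (0 + q i * q j)) :=
      (hB0 i j).add_const _
    rw [zero_add] at h1
    refine h1.congr' ?_
    filter_upwards [eventually_ge_atTop 1] with k hk
    rw [hBpow k hk]
    simp [Matrix.sub_apply, hQ_def]
  set T : ℝ := ∑ j, q j with hT_def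
  have hTpos : 0 < T := Finset.sum_pos (fun j _ => hqpos j) Finset.univ_nonempty
  have hterm : ∀ i, Tendsto (fun k => (Ahat ^ k) i i / ∑ j, (Ahat ^ k) i j) atTop
      (nhds (q i / T)) := by
    intro i
    have hden : Tendsto (fun k => ∑ j, (Ahat ^ k) i j) atTop (nhds (q i * T)) := by
      have := tendsto_finset_sum Finset.univ (fun j (_ : j ∈ Finset.univ) => hAk i j)
      simpa [Finset.mul_sum, hT_def] using this
    have hnum := hAk i i
    have hne : q i * T ≠ 0 := (mul_pos (hqpos i) hTpos).ne'
    have hdiv := hnum.div hden hne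
    have hval : q i * q i / (q i * T) = q i / T := by
      rw [mul_div_mul_left _ _ (hqpos i).ne']
    rwa [hval] at hdiv
  have hsum : Tendsto (fun k => ∑ i, (Ahat ^ k) i i / ∑ j, (Ahat ^ k) i j) atTop (nhds 1) := by
    have hs := tendsto_finset_sum Finset.univ (fun i (_ : i ∈ Finset.univ) => hterm i)
    have hone : ∑ i, q i / T = 1 := by rw [← Finset.sum_div, ← hT_def, div_self hTpos.ne']
    rwa [hone] at hs
  have hfin := hsum.const_mul (1 / N : ℝ)
  simpa using hfin
end
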